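/- Let R be a commutative ring of characteristic p > 0 and let g = 1 + h be an element of the divided power series ring R{{𝔇}} with h having zero constant term. Then g^p = 1. -/

import Mathlib

open Finset Polynomial

/-- Multiplication in the divided power series ring `R{{𝔇}}`, written coefficientwise:
`(a·b)_n = ∑ C(n,i) a_i b_{n-i}`, corresponding to `𝔇_i·𝔇_j = C(i+j,j) 𝔇_{i+j}`. -/
def dpMul {R : Type*} [CommRing R] (a b : ℕ → R) : ℕ → R :=
  fun n => ∑ i ∈ Finset.range (n + 1), (n.choose i : R) * a i * b (n - i)

/-- The unit `1 = 𝔇_0` of the divided power series ring. -/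
def dpOne (R : Type*) [CommRing R] : ℕ → R := fun n => if n = 0 then 1 else 0

/-- A sequence of polynomials satisfies the Binomial Theorem:
`p_n(x+y) = ∑_{i=0}^n C(n,i) p_i(x) p_{n-i}(y)` in `F[x,y]`. -/
def IsBinomialSeq {F : Type*} [Field F] (p : ℕ → Polynomial F) : Prop :=
  ∀ n : ℕ,
    Polynomial.aeval (MvPolynomial.X 0 + MvPolynomial.X 1 : MvPolynomial (Fin 2) F) (p n) =
      ∑ i ∈ Finset.range (n + 1), (n.choose i : MvPolynomial (Fin 2) F) *
        Polynomial.aeval (MvPolynomial.X 0 : MvPolynomial (Fin 2) F) (p i) *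
        Polynomial.aeval (MvPolynomial.X 1 : MvPolynomial (Fin 2) F) (p (n - i))


/-- `p`-th power in the divided power series ring. -/
def dpPow {R : Type*} [CommRing R] (a : ℕ → R) : ℕ → (ℕ → R)
  | 0 => dpOne R
  | n + 1 => dpMul a (dpPow a n)

/-! In characteristic `p` the Frobenius `x ↦ x ^ p` of the commutative ring `R{{𝔇}}` is additive.
The coefficient of `𝔇_n` in `h ^ p` only depends on the coefficients of `h` up to `n`, so `h` may
be replaced by a finite sum of monomials `r 𝔇_k` with `k ≥ 1`. The `p`-th power of such a monomial
is `(r 𝔇_k) · c 𝔇_{(p-1)k} = C(pk, k) r c 𝔇_{pk}`, and `C(pk, k) = p · C(pk - 1, k - 1)` vanishes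
in `R`. Hence `h ^ p = 0` and `(1 + h) ^ p = 1 + h ^ p = 1`. -/

lemma Nat.choose_add_mul_choose (i j k : ℕ) :
    (i + j + k).choose (i + j) * (i + j).choose i = (i + (j + k)).choose i * (j + k).choose j := by
  have h := Nat.choose_mul (n := i + j + k) (k := i + j) (s := i) (Nat.le_add_right i j)
  rw [Nat.add_sub_cancel_left, add_assoc, Nat.add_sub_cancel_left] at h
  rwa [add_assoc]

def DividedPowerSeries (R : Type*) [CommRing R] := ℕ → R

namespace DividedPowerSeries

variable {R : Type*} [CommRing R]

lemma dpMul_eq_sum_antidiagonal (a b : ℕ → R) (n : ℕ) :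
    dpMul a b n = ∑ x ∈ antidiagonal n, ((x.1 + x.2).choose x.1 : R) * a x.1 * b x.2 := by
  rw [dpMul, ← Nat.sum_antidiagonal_eq_sum_range_succ (fun i j => (n.choose i : R) * a i * b j)]
  exact Finset.sum_congr rfl fun x hx => by rw [mem_antidiagonal.mp hx]

lemma dpMul_comm (a b : ℕ → R) : dpMul a b = dpMul b a := by
  funext n
  rw [dpMul_eq_sum_antidiagonal, dpMul_eq_sum_antidiagonal, ← Nat.sum_antidiagonal_swap]
  refine Finset.sum_congr rfl fun x _ => ?_
  rw [Prod.fst_swap, Prod.snd_swap, add_comm, Nat.choose_symm_add]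
  ring

lemma dpOne_dpMul (a : ℕ → R) : dpMul (dpOne R) a = a := by
  funext n
  rw [dpMul, Finset.sum_eq_single 0] <;> simp +contextual [dpOne]

lemma zero_dpMul (a : ℕ → R) : dpMul 0 a = 0 := by
  funext n
  simp [dpMul]

lemma dpMul_add (a b c : ℕ → R) : dpMul a (b + c) = dpMul a b + dpMul a c := by
  funext n
  simp only [dpMul, Pi.add_apply, mul_add, Finset.sum_add_distrib]

lemma add_dpMul (a b c : ℕ → R) : dpMul (a + b) c = dpMul a c + dpMul b c := by
  rw [dpMul_comm, dpMul_add, dpMul_comm c, dpMul_comm c]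

lemma dpMul_assoc (a b c : ℕ → R) : dpMul (dpMul a b) c = dpMul a (dpMul b c) := by
  funext n
  simp only [dpMul_eq_sum_antidiagonal, Finset.sum_mul, Finset.mul_sum, Finset.sum_sigma']
  apply Finset.sum_nbij' (fun ⟨⟨_, k⟩, ⟨i, j⟩⟩ ↦ ⟨(i, j + k), (j, k)⟩)
    (fun ⟨⟨i, _⟩, ⟨j, k⟩⟩ ↦ ⟨(i + j, k), (i, j)⟩)
  all_goals rintro ⟨⟨_, k⟩, ⟨i, j⟩⟩ hx
  all_goals simp only [mem_sigma, HasAntidiagonal.mem_antidiagonal] at hx ⊢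
  all_goals obtain ⟨rfl, rfl⟩ := hx
  case h =>
    have := congrArg (Nat.cast : ℕ → R) (Nat.choose_add_mul_choose i j k)
    push_cast at this
    linear_combination (a i * b j * c k) * this
  all_goals simp only [add_assoc, and_self]

def ofFun (a : ℕ → R) : DividedPowerSeries R := a

instance : AddCommGroup (DividedPowerSeries R) := inferInstanceAs (AddCommGroup (ℕ → R))

def coeff (n : ℕ) : DividedPowerSeries R →+ R := Pi.evalAddMonoidHom (fun _ => R) n

@[ext]
lemma ext {a b : DividedPowerSeries R} (h : ∀ n, coeff n a = coeff n b) : a = b := _root_.funext h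

instance : CommRing (DividedPowerSeries R) where
  mul := dpMul
  one := dpOne R
  mul_assoc := dpMul_assoc
  one_mul := dpOne_dpMul
  mul_one a := (dpMul_comm _ _).trans (dpOne_dpMul a)
  left_distrib := dpMul_add
  right_distrib := add_dpMul
  zero_mul := zero_dpMul
  mul_zero a := (dpMul_comm _ _).trans (zero_dpMul a)
  mul_comm := dpMul_comm

lemma coeff_ofFun (a : ℕ → R) (n : ℕ) : coeff n (ofFun a) = a n := rfl

lemma coeff_one (n : ℕ) : coeff n (1 : DividedPowerSeries R) = if n = 0 then 1 else 0 := rfl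

lemma coeff_mul (a b : DividedPowerSeries R) (n : ℕ) :
    coeff n (a * b) = ∑ i ∈ range (n + 1), (n.choose i : R) * coeff i a * coeff (n - i) b := rfl

lemma coeff_mul_eq_sum_antidiagonal (a b : DividedPowerSeries R) (n : ℕ) :
    coeff n (a * b) =
      ∑ x ∈ antidiagonal n, ((x.1 + x.2).choose x.1 : R) * coeff x.1 a * coeff x.2 b :=
  dpMul_eq_sum_antidiagonal a b n

lemma dpPow_apply (g : ℕ → R) (m n : ℕ) : dpPow g m n = coeff n (ofFun g ^ m) := by
  induction m generalizing n with
  | zero => rfl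
  | succ m ih =>
    rw [pow_succ', coeff_mul, dpPow, dpMul]
    simp only [ih]
    rfl

def monomial (k : ℕ) (r : R) : DividedPowerSeries R := ofFun (Pi.single k r)

lemma coeff_monomial (k n : ℕ) (r : R) : coeff n (monomial k r) = if n = k then r else 0 :=
  Pi.single_apply k r n

lemma monomial_zero_right (k : ℕ) : monomial k (0 : R) = 0 := Pi.single_zero k

lemma monomial_add (k : ℕ) (r u : R) : monomial k (r + u) = monomial k r + monomial k u := by
  ext n
  simp only [map_add, coeff_monomial]
  split_ifs <;> simp

lemma monomial_zero_one : monomial 0 (1 : R) = 1 := by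
  ext n
  rw [coeff_monomial, coeff_one]

lemma monomial_mul_monomial (s t : ℕ) (r u : R) :
    monomial s r * monomial t u = monomial (s + t) ((s + t).choose s * r * u) := by
  ext n
  simp only [coeff_mul_eq_sum_antidiagonal, coeff_monomial, mul_ite, ite_mul, mul_zero, zero_mul]
  split_ifs with hn
  · rw [Finset.sum_eq_single (s, t)]
    · simp
    · intro x _ hx
      grind
    · simp [hn]
  · refine Finset.sum_eq_zero fun x hx => ?_
    rw [HasAntidiagonal.mem_antidiagonal] at hx
    grind

def C : R →+* DividedPowerSeries R where
  toFun := monomial 0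
  map_one' := monomial_zero_one
  map_mul' r u := by simp [monomial_mul_monomial]
  map_zero' := monomial_zero_right 0
  map_add' := monomial_add 0

instance (p : ℕ) [CharP R p] : CharP (DividedPowerSeries R) p :=
  charP_of_injective_ringHom (f := C)
    (fun r u h => by simpa [C, coeff_monomial] using congrArg (coeff 0) h) p

lemma exists_monomial_pow (k : ℕ) (r : R) (m : ℕ) :
    ∃ c, monomial k r ^ m = monomial (m * k) c := by
  induction m with
  | zero => exact ⟨1, by rw [pow_zero, zero_mul, monomial_zero_one]⟩
  | succ m ih =>
    obtain ⟨c, hc⟩ := ih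
    exact ⟨_, by rw [pow_succ', hc, monomial_mul_monomial, show k + m * k = (m + 1) * k by ring]⟩

lemma exists_monomial_pow_succ {k : ℕ} (hk : k ≠ 0) (r : R) (m : ℕ) :
    ∃ c, monomial k r ^ (m + 1) = monomial ((m + 1) * k) (((m + 1 : ℕ) : R) * c) := by
  obtain ⟨c, hc⟩ := exists_monomial_pow k r m
  have hchoose : (k + m * k).choose k = (m + 1) * (m * k + k - 1).choose (k - 1) := by
    rw [add_comm, Nat.choose_mul_add hk]
  refine ⟨(m * k + k - 1).choose (k - 1) * r * c, ?_⟩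
  rw [pow_succ', hc, monomial_mul_monomial, hchoose, show k + m * k = (m + 1) * k by ring]
  congr 1
  push_cast
  ring

lemma monomial_pow_char_eq_zero {p : ℕ} [CharP R p] (hp : p ≠ 0) {k : ℕ} (hk : k ≠ 0) (r : R) :
    monomial k r ^ p = 0 := by
  obtain ⟨m, rfl⟩ := Nat.exists_eq_succ_of_ne_zero hp
  obtain ⟨c, hc⟩ := exists_monomial_pow_succ hk r m
  rw [hc, CharP.cast_eq_zero, zero_mul, monomial_zero_right]

lemma coeff_mul_eq_zero_of_forall_le {n : ℕ} {a : DividedPowerSeries R}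
    (ha : ∀ m ≤ n, coeff m a = 0) (b : DividedPowerSeries R) : ∀ m ≤ n, coeff m (a * b) = 0 :=
  fun m hm => by
    rw [coeff_mul]
    exact Finset.sum_eq_zero fun i hi => by rw [ha i (by grind), mul_zero, zero_mul]

lemma coeff_pow_eq_of_forall_le {n : ℕ} {a b : DividedPowerSeries R}
    (h : ∀ m ≤ n, coeff m a = coeff m b) (e : ℕ) : coeff n (a ^ e) = coeff n (b ^ e) := by
  obtain ⟨q, hq⟩ := sub_dvd_pow_sub_pow a b e
  have hab : ∀ m ≤ n, coeff m (a - b) = 0 := fun m hm => by rw [map_sub, h m hm, sub_self]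
  rw [← sub_eq_zero, ← map_sub, hq]
  exact coeff_mul_eq_zero_of_forall_le hab q n le_rfl

lemma pow_char_eq_zero_of_coeff_zero_eq_zero {p : ℕ} [CharP R p] (hp : p.Prime)
    {h : DividedPowerSeries R} (h0 : coeff 0 h = 0) : h ^ p = 0 := by
  have := Fact.mk hp
  ext n
  set S := ∑ k ∈ Icc 1 n, monomial k (coeff k h)
  have hS : ∀ m ≤ n, coeff m h = coeff m S := fun m hm => by
    simp only [S, map_sum, coeff_monomial, Finset.sum_ite_eq, mem_Icc]
    grind
  have hSp : S ^ p = 0 := by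
    rw [sum_pow_char]
    exact Finset.sum_eq_zero fun k hk => monomial_pow_char_eq_zero hp.ne_zero (by grind) _
  rw [coeff_pow_eq_of_forall_le hS, hSp]

lemma pow_char_eq_one_of_coeff_zero_eq_one {p : ℕ} [CharP R p] (hp : p.Prime)
    {g : DividedPowerSeries R} (h0 : coeff 0 g = 1) : g ^ p = 1 := by
  have := Fact.mk hp
  have hg : coeff 0 (g - 1) = 0 := by rw [map_sub, h0, coeff_one, if_pos rfl, sub_self]
  calc g ^ p = (1 + (g - 1)) ^ p := by rw [add_sub_cancel]
    _ = 1 := by rw [add_pow_char, one_pow, pow_char_eq_zero_of_coeff_zero_eq_zero hp hg, add_zero]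

end DividedPowerSeries

/-- In characteristic `p`, any `g = 1 + (higher terms)` in `R{{𝔇}}` satisfies `g^p = 1`. -/
theorem stmt6 {R : Type*} [CommRing R] (p : ℕ) (hp : p.Prime) [CharP R p]
    (g : ℕ → R) (h0 : g 0 = 1) : dpPow g p = dpOne R := by
  funext n
  rw [DividedPowerSeries.dpPow_apply, DividedPowerSeries.pow_char_eq_one_of_coeff_zero_eq_one hp
    ((DividedPowerSeries.coeff_ofFun g 0).trans h0)]
  rfl
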